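/- In a temporal graph with lifetime 2, for the purpose of minimizing the reachability set of a single source by δ-delays, delaying only edges with label 1 suffices: for every set of at most κ δ-delays there is another set of at most κ δ-delays applied only to label-1 edges achieving a reachability set of the source that is a subset of the former. -/

import Mathlib

/-- `Reaches F s u t`: strict temporal path in the temporal graph given by the finite set `F`
of temporal edges `(u, v, label)`, arriving at time `t`. -/
inductive Reaches {V : Type*} (F : Finset (V × V × ℕ)) (s : V) : V → ℕ → Prop
  | refl : Reaches F s s 0
  | step {u v : V} {t t' : ℕ} : Reaches F s u t → (u, v, t') ∈ F → t < t' → Reaches F s v t'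

def TReach {V : Type*} (F : Finset (V × V × ℕ)) (s u : V) : Prop := ∃ t, Reaches F s u t

/-- Apply the delaying scheme `D` (giving the new label of each temporal edge). -/
def applyDelay {V : Type*} [DecidableEq V] (F : Finset (V × V × ℕ))
    (D : V × V × ℕ → ℕ) : Finset (V × V × ℕ) :=
  F.image fun e => (e.1, e.2.1, D e)

/-- `D` is a δ-delaying scheme: each label is delayed by at most `δ`. -/
def ValidDelay {V : Type*} (F : Finset (V × V × ℕ)) (δ : ℕ) (D : V × V × ℕ → ℕ) : Prop :=
  ∀ e ∈ F, e.2.2 ≤ D e ∧ D e ≤ e.2.2 + δ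

/-- Number of temporal edges actually delayed by `D`. -/
def numDelays {V : Type*} (F : Finset (V × V × ℕ)) (D : V × V × ℕ → ℕ) : ℕ :=
  (F.filter fun e => D e ≠ e.2.2).card

/-!
Capping every label of a delaying scheme at the lifetime `L` never delays an edge of label `L`
and delays no edge that was not delayed before. A strict temporal path of the capped graph is at
time at most `L - 1` before its last edge, so all its edges but the last have labels below `L`
and carry them unchanged under the original scheme, while the cap can only have moved the last
edge earlier. Hence the same path exists under the original scheme.
-/

section Simulation

variable {V : Type*} {G H : Finset (V × V × ℕ)} {s : V} {T : ℕ}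

theorem Reaches.simulate (hG : ∀ u v a, (u, v, a) ∈ G → a ≤ T + 1)
    (hsim : ∀ u v a, (u, v, a) ∈ G → ∃ b, (u, v, b) ∈ H ∧ a ≤ b ∧ (a ≤ T → b = a))
    {u : V} {t : ℕ} (h : Reaches G s u t) : TReach H s u ∧ (t ≤ T → Reaches H s u t) := by
  induction h with
  | refl => exact ⟨⟨0, .refl⟩, fun _ => .refl⟩
  | @step u v t a _ hmem hlt ih =>
    obtain ⟨b, hbH, hab, hba⟩ := hsim u v a hmem
    have hreach : Reaches H s v b := .step (ih.2 (by have := hG u v a hmem; omega)) hbH (by omega)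
    exact ⟨⟨b, hreach⟩, fun ha => hba ha ▸ hreach⟩

theorem TReach.simulate (hG : ∀ u v a, (u, v, a) ∈ G → a ≤ T + 1)
    (hsim : ∀ u v a, (u, v, a) ∈ G → ∃ b, (u, v, b) ∈ H ∧ a ≤ b ∧ (a ≤ T → b = a))
    {u : V} (h : TReach G s u) : TReach H s u :=
  let ⟨_, ht⟩ := h
  (ht.simulate hG hsim).1

end Simulation

theorem mem_applyDelay {V : Type*} [DecidableEq V] {F : Finset (V × V × ℕ)} {D : V × V × ℕ → ℕ}
    {u v : V} {a : ℕ} :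
    (u, v, a) ∈ applyDelay F D ↔ ∃ e ∈ F, e.1 = u ∧ e.2.1 = v ∧ D e = a := by
  simp [applyDelay, Prod.ext_iff]

section Cap

variable {V : Type*} {F : Finset (V × V × ℕ)} {D : V × V × ℕ → ℕ} {δ T : ℕ}

def capDelay (D : V × V × ℕ → ℕ) (L : ℕ) : V × V × ℕ → ℕ := fun e => min (D e) L

theorem validDelay_capDelay (hlife : ∀ e ∈ F, e.2.2 ≤ T) (hD : ValidDelay F δ D) :
    ValidDelay F δ (capDelay D T) := fun e he =>
  ⟨le_min (hD e he).1 (hlife e he), (min_le_left _ _).trans (hD e he).2⟩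

theorem numDelays_capDelay_le (hlife : ∀ e ∈ F, e.2.2 ≤ T) :
    numDelays F (capDelay D T) ≤ numDelays F D := by
  refine Finset.card_le_card fun e he => ?_
  obtain ⟨heF, hne⟩ := Finset.mem_filter.mp he
  refine Finset.mem_filter.mpr ⟨heF, fun hDe => hne ?_⟩
  rw [capDelay, hDe, min_eq_left (hlife e heF)]

theorem capDelay_eq_of_label_eq (hD : ValidDelay F δ D) {e : V × V × ℕ} (he : e ∈ F)
    (hT : e.2.2 = T) : capDelay D T e = e.2.2 :=
  hT ▸ min_eq_right (hD e he).1

theorem TReach.of_capDelay [DecidableEq V] {s u : V}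
    (h : TReach (applyDelay F (capDelay D (T + 1))) s u) : TReach (applyDelay F D) s u := by
  refine h.simulate (T := T) (fun u v a ha => ?_) (fun u v a ha => ?_)
  · obtain ⟨e, -, -, -, rfl⟩ := mem_applyDelay.mp ha
    exact min_le_right _ _
  · obtain ⟨e, he, rfl, rfl, rfl⟩ := mem_applyDelay.mp ha
    refine ⟨D e, mem_applyDelay.mpr ⟨e, he, rfl, rfl, rfl⟩, min_le_left _ _, fun hle => ?_⟩
    unfold capDelay at hle ⊢
    omega

end Cap

theorem stmt7_general {V : Type*} [DecidableEq V] (F : Finset (V × V × ℕ))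
    (hlife : ∀ e ∈ F, e.2.2 = 1 ∨ e.2.2 = 2) (s : V) (δ κ : ℕ)
    (D : V × V × ℕ → ℕ) (hD : ValidDelay F δ D) (hκ : numDelays F D ≤ κ) :
    ∃ D' : V × V × ℕ → ℕ, ValidDelay F δ D' ∧ numDelays F D' ≤ κ ∧
      (∀ e ∈ F, D' e ≠ e.2.2 → e.2.2 = 1) ∧
      {u | TReach (applyDelay F D') s u} ⊆ {u | TReach (applyDelay F D) s u} := by
  have hlife' : ∀ e ∈ F, e.2.2 ≤ 2 := fun e he => by rcases hlife e he with h | h <;> omega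
  refine ⟨capDelay D 2, validDelay_capDelay hlife' hD, (numDelays_capDelay_le hlife').trans hκ,
    fun e he hne => ?_, fun u => TReach.of_capDelay (T := 1)⟩
  refine (hlife e he).resolve_right fun h2 => hne ?_
  exact capDelay_eq_of_label_eq hD he h2

/-- In a temporal graph of lifetime 2, for minimizing the reachability set of a single source
by at most `κ` δ-delays, delaying only label-1 edges suffices. -/
theorem stmt7 {V : Type*} [Fintype V] [DecidableEq V] (F : Finset (V × V × ℕ))
    (hlife : ∀ e ∈ F, e.2.2 = 1 ∨ e.2.2 = 2) (s : V) (δ κ : ℕ) (hδ : 1 ≤ δ)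
    (D : V × V × ℕ → ℕ) (hD : ValidDelay F δ D) (hκ : numDelays F D ≤ κ) :
    ∃ D' : V × V × ℕ → ℕ, ValidDelay F δ D' ∧ numDelays F D' ≤ κ ∧
      (∀ e ∈ F, D' e ≠ e.2.2 → e.2.2 = 1) ∧
      {u | TReach (applyDelay F D') s u} ⊆ {u | TReach (applyDelay F D) s u} :=
  stmt7_general F hlife s δ κ D hD hκ
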